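/- Let p_0, p_1, p_2, p_3 ∈ ℝ³ with signed volume V = (1/6) ⟨p_1 − p_0, (p_2 − p_0) × (p_3 − p_0)⟩ ≠ 0, and let S_i and b_i be the face area vectors and face barycenters as above. Then for every affine map v : ℝ³ → ℝ³ with linear part B (i.e. v(x) = v_0 + B x), one has ∑_{i=0}^{3} v(b_i) ⊗ S_i = V · B. Hence the cellwise discrete gradient reconstruction G_c(v) = (1/V) ∑_i v(b_i) ⊗ S_i of the variational discrete element method is exact on affine displacement fields: G_c(v) = B. -/

import Mathlib

/-
The face area vectors of a tetrahedron sum to zero (the boundary is closed), and the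
barycentric face sums satisfy `∑ᵢ bᵢ ⊗ Sᵢ = V • 1`, the discrete divergence theorem for the
field `x ↦ x`; both are polynomial identities in the vertices. For `v x = v₀ + B x` the first
kills the constant part, and `B bᵢ ⊗ Sᵢ = B * (bᵢ ⊗ Sᵢ)` turns the second into `V • B`.
-/

open scoped BigOperators Matrix

noncomputable section

/-- Outer product `u ⊗ w` of two vectors of `ℝ³`. -/
def outer3 (u w : Fin 3 → ℝ) : Matrix (Fin 3) (Fin 3) ℝ := fun i j => u i * w j

open Matrix

theorem outer3_eq_vecMulVec (u w : Fin 3 → ℝ) : outer3 u w = vecMulVec u w := rfl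

section VecMulVec

variable {ι m n R : Type*} [Fintype ι] [CommRing R]

theorem vecMulVec_sum (u : m → R) (w : ι → n → R) :
    vecMulVec u (∑ i, w i) = ∑ i, vecMulVec u (w i) := by
  ext j k
  simp only [vecMulVec_apply, Finset.sum_apply, Matrix.sum_apply, Finset.mul_sum]

theorem sum_vecMulVec_affine [Fintype n] (v₀ : n → R) (B : Matrix n n R) (b S : ι → n → R)
    (hS : ∑ i, S i = 0) :
    ∑ i, vecMulVec (v₀ + B *ᵥ b i) (S i) = B * ∑ i, vecMulVec (b i) (S i) := by
  simp only [add_vecMulVec, Finset.sum_add_distrib, ← vecMulVec_sum, hS, vecMulVec_zero,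
    zero_add, Finset.mul_sum, mul_vecMulVec]

end VecMulVec

namespace Tetrahedron

variable {K : Type*} [Field K] (p₀ p₁ p₂ p₃ : Fin 3 → K)

def faceAreaVector : Fin 4 → Fin 3 → K :=
  ![(1 / 2 : K) • ((p₂ - p₁) ⨯₃ (p₃ - p₁)), (1 / 2 : K) • ((p₃ - p₀) ⨯₃ (p₂ - p₀)),
    (1 / 2 : K) • ((p₁ - p₀) ⨯₃ (p₃ - p₀)), (1 / 2 : K) • ((p₂ - p₀) ⨯₃ (p₁ - p₀))]

def faceBarycenter : Fin 4 → Fin 3 → K :=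
  ![(1 / 3 : K) • (p₁ + p₂ + p₃), (1 / 3 : K) • (p₀ + p₂ + p₃),
    (1 / 3 : K) • (p₀ + p₁ + p₃), (1 / 3 : K) • (p₀ + p₁ + p₂)]

def signedVolume : K := (1 / 6 : K) * ((p₁ - p₀) ⬝ᵥ ((p₂ - p₀) ⨯₃ (p₃ - p₀)))

theorem sum_faceAreaVector : ∑ i, faceAreaVector p₀ p₁ p₂ p₃ i = 0 := by
  ext j
  fin_cases j <;>
    simp only [faceAreaVector, Fin.sum_univ_four, Finset.sum_apply, Pi.zero_apply, Pi.smul_apply,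
      Pi.sub_apply, smul_eq_mul, cross_apply, cons_val_zero, cons_val_one, cons_val_two,
      cons_val_three, Fin.isValue, Fin.zero_eta, Fin.mk_one, Fin.reduceFinMk,
      head_cons, tail_cons] <;>
    ring

theorem sum_vecMulVec_faceBarycenter_faceAreaVector :
    ∑ i, vecMulVec (faceBarycenter p₀ p₁ p₂ p₃ i) (faceAreaVector p₀ p₁ p₂ p₃ i) =
      signedVolume p₀ p₁ p₂ p₃ • (1 : Matrix (Fin 3) (Fin 3) K) := by
  have h6 : (1 / 6 : K) = 1 / 3 * (1 / 2) := by
    rw [one_div_mul_one_div]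
    norm_num
  ext j k
  fin_cases j <;> fin_cases k <;>
    simp only [faceAreaVector, faceBarycenter, signedVolume, h6, Fin.sum_univ_four, Matrix.sum_apply,
      vecMulVec_apply, Matrix.smul_apply, Pi.smul_apply, Pi.add_apply, Pi.sub_apply, smul_eq_mul,
      cross_apply, dotProduct, Fin.sum_univ_three, one_apply_eq, one_apply_ne, ne_eq,
      Fin.reduceEq, not_false_eq_true, mul_one, mul_zero, cons_val_zero, cons_val_one,
      cons_val_two, cons_val_three, Fin.isValue, Fin.zero_eta, Fin.mk_one,
      Fin.reduceFinMk, head_cons, tail_cons] <;>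
    ring

end Tetrahedron

theorem tetrahedron_gradient_reconstruction_exact_on_affine (p₀ p₁ p₂ p₃ : Fin 3 → ℝ)
    (S : Fin 4 → Fin 3 → ℝ)
    (hS0 : S 0 = (1 / 2 : ℝ) • ((p₂ - p₁) ⨯₃ (p₃ - p₁)))
    (hS1 : S 1 = (1 / 2 : ℝ) • ((p₃ - p₀) ⨯₃ (p₂ - p₀)))
    (hS2 : S 2 = (1 / 2 : ℝ) • ((p₁ - p₀) ⨯₃ (p₃ - p₀)))
    (hS3 : S 3 = (1 / 2 : ℝ) • ((p₂ - p₀) ⨯₃ (p₁ - p₀)))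
    (b : Fin 4 → Fin 3 → ℝ)
    (hb0 : b 0 = (1 / 3 : ℝ) • (p₁ + p₂ + p₃))
    (hb1 : b 1 = (1 / 3 : ℝ) • (p₀ + p₂ + p₃))
    (hb2 : b 2 = (1 / 3 : ℝ) • (p₀ + p₁ + p₃))
    (hb3 : b 3 = (1 / 3 : ℝ) • (p₀ + p₁ + p₂))
    (V : ℝ) (hV : V = (1 / 6 : ℝ) * ((p₁ - p₀) ⬝ᵥ ((p₂ - p₀) ⨯₃ (p₃ - p₀))))
    (hV0 : V ≠ 0)
    (v : (Fin 3 → ℝ) → (Fin 3 → ℝ)) (v₀ : Fin 3 → ℝ) (B : Matrix (Fin 3) (Fin 3) ℝ)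
    (hv : ∀ x, v x = v₀ + B.mulVec x) :
    (∑ i, outer3 (v (b i)) (S i)) = V • B ∧
    (1 / V) • (∑ i, outer3 (v (b i)) (S i)) = B := by
  have hS : S = Tetrahedron.faceAreaVector p₀ p₁ p₂ p₃ := by
    funext i
    fin_cases i <;> assumption
  have hb : b = Tetrahedron.faceBarycenter p₀ p₁ p₂ p₃ := by
    funext i
    fin_cases i <;> assumption
  have hsum : ∑ i, outer3 (v (b i)) (S i) = V • B := by
    simp only [outer3_eq_vecMulVec, hv, hS, hb]
    rw [sum_vecMulVec_affine _ _ _ _ (Tetrahedron.sum_faceAreaVector p₀ p₁ p₂ p₃),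
      Tetrahedron.sum_vecMulVec_faceBarycenter_faceAreaVector, mul_smul_comm, mul_one, hV,
      Tetrahedron.signedVolume]
  refine ⟨hsum, ?_⟩
  rw [hsum, smul_smul, one_div_mul_cancel hV0, one_smul]
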